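/- arXiv:2205.02943 — 3 statements merged into one kernel-verified Lean document; each statement's English description precedes it below -/
import Mathlib

section
/- Let Z be a metric space with nonempty Cauchy boundary, and let K₁, K₂ be compact subsets of Z with inf_{x∈K₁} d(x,∂Z) > 0 and inf_{x∈K₂} d(x,∂Z) > 0. Then the set of similarity ratios of all similarities γ of Z satisfying γ(K₁) ∩ K₂ ≠ ∅ is contained in a compact subset of (0,∞). -/
/-!
A similarity `γ` of ratio `λ` extends to a similarity of the completion which permutes the
Cauchy boundary, so `d(γ x, ∂Z) = λ · d(x, ∂Z)` for every `x : Z`. By compactness,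
`d(·, ∂Z)` lies between positive constants `a₁ ≤ b₁` on `K₁` and `a₂ ≤ b₂` on `K₂`; hence
if `x ∈ K₁` and `γ x ∈ K₂`, then `λ = d(γ x, ∂Z) / d(x, ∂Z)` lies in `[a₂ / b₁, b₂ / a₁]`.
-/

open Metric

/-- The Cauchy boundary of a metric space `Z`: the complement of the image of `Z`
in its metric completion. -/
def cauchyBoundary (Z : Type*) [MetricSpace Z] : Set (UniformSpace.Completion Z) :=
  (Set.range ((↑) : Z → UniformSpace.Completion Z))ᶜ

open UniformSpace

section Similarity

variable {X Y : Type*} [PseudoMetricSpace X] [PseudoMetricSpace Y] {f : X → Y} {r : ℝ}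

theorem Metric.infDist_image_of_dist_eq_mul (hr : 0 < r)
    (hf : ∀ x y, dist (f x) (f y) = r * dist x y) (x : X) (t : Set X) :
    infDist (f x) (f '' t) = r * infDist x t := by
  have hedist : ∀ x y, edist (f x) (f y) = ENNReal.ofReal r * edist x y := fun x y => by
    rw [edist_dist, edist_dist, hf, ENNReal.ofReal_mul hr.le]
  have hinf : infEDist (f x) (f '' t) = ENNReal.ofReal r * infEDist x t := by
    simp only [infEDist, iInf_image, hedist,
      ENNReal.mul_iInf_of_ne (ENNReal.ofReal_pos.2 hr).ne' ENNReal.ofReal_ne_top]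
  rw [infDist, infDist, hinf, ENNReal.toReal_mul, ENNReal.toReal_ofReal hr.le]

theorem uniformContinuous_of_dist_eq_mul (hf : ∀ x y, dist (f x) (f y) = r * dist x y) :
    UniformContinuous f :=
  (LipschitzWith.of_dist_le_mul fun x y => (hf x y).trans_le <|
    mul_le_mul_of_nonneg_right (Real.le_coe_toNNReal r) dist_nonneg).uniformContinuous

theorem Equiv.dist_symm_eq_inv_mul (γ : X ≃ Y) (hr : 0 < r)
    (hγ : ∀ x y, dist (γ x) (γ y) = r * dist x y) (a b : Y) :
    dist (γ.symm a) (γ.symm b) = r⁻¹ * dist a b := by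
  rw [eq_inv_mul_iff_mul_eq₀ hr.ne', ← hγ, γ.apply_symm_apply, γ.apply_symm_apply]

def Equiv.toUniformEquivOfDistEqMul (γ : X ≃ Y) (hr : 0 < r)
    (hγ : ∀ x y, dist (γ x) (γ y) = r * dist x y) : X ≃ᵤ Y where
  toEquiv := γ
  uniformContinuous_toFun := uniformContinuous_of_dist_eq_mul hγ
  uniformContinuous_invFun := uniformContinuous_of_dist_eq_mul (γ.dist_symm_eq_inv_mul hr hγ)

theorem UniformSpace.Completion.dist_mapEquiv_eq_mul (e : X ≃ᵤ Y)
    (he : ∀ x y, dist (e x) (e y) = r * dist x y) (a b : Completion X) :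
    dist (Completion.mapEquiv e a) (Completion.mapEquiv e b) = r * dist a b := by
  induction a, b using Completion.induction_on₂ with
  | hp =>
    have := (Completion.mapEquiv e).continuous
    exact isClosed_eq (by fun_prop) (by fun_prop)
  | ih x y => simp only [Completion.mapEquiv_coe, Completion.dist_eq, he]

end Similarity

theorem mapEquiv_image_cauchyBoundary {X Y : Type*} [MetricSpace X] [MetricSpace Y]
    (e : X ≃ᵤ Y) : Completion.mapEquiv e '' cauchyBoundary X = cauchyBoundary Y := by
  have hcoe : Completion.mapEquiv e ∘ ((↑) : X → Completion X) = (↑) ∘ e :=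
    funext (Completion.mapEquiv_coe e)
  rw [cauchyBoundary, cauchyBoundary, Set.image_compl_eq (Completion.mapEquiv e).bijective,
    ← Set.range_comp, hcoe, EquivLike.range_comp]

theorem infDist_cauchyBoundary_apply_of_dist_eq_mul {Z : Type*} [MetricSpace Z] (γ : Z ≃ Z)
    {r : ℝ} (hr : 0 < r) (hγ : ∀ x y, dist (γ x) (γ y) = r * dist x y) (x : Z) :
    infDist (↑(γ x) : Completion Z) (cauchyBoundary Z) =
      r * infDist (↑x : Completion Z) (cauchyBoundary Z) := by
  let e := γ.toUniformEquivOfDistEqMul hr hγ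
  have := infDist_image_of_dist_eq_mul hr (Completion.dist_mapEquiv_eq_mul e hγ)
    (x : Completion Z) (cauchyBoundary Z)
  rwa [Completion.mapEquiv_coe, mapEquiv_image_cauchyBoundary] at this

theorem IsCompact.exists_pos_forall_mem_Icc {X : Type*} [TopologicalSpace X] {K : Set X}
    (hK : IsCompact K) {g : X → ℝ} (hg : ContinuousOn g K) (hpos : 0 < ⨅ x : K, g x) :
    ∃ a b : ℝ, 0 < a ∧ 0 < b ∧ ∀ x ∈ K, g x ∈ Set.Icc a b := by
  obtain ⟨M, hM⟩ := hK.bddAbove_image hg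
  have hbdd : BddBelow (Set.range fun x : K => g x) := by
    simpa only [Set.image_eq_range] using hK.bddBelow_image hg
  refine ⟨_, max M (⨅ x : K, g x), hpos, lt_max_of_lt_right hpos, fun x hx => ⟨?_, ?_⟩⟩
  · exact ciInf_le hbdd ⟨x, hx⟩
  · exact le_max_of_le_left (hM (Set.mem_image_of_mem g hx))

theorem stmt_1_general {Z : Type*} [MetricSpace Z]
    (K₁ K₂ : Set Z) (hK₁ : IsCompact K₁) (hK₂ : IsCompact K₂)
    (h₁ : 0 < ⨅ x : K₁, infDist (↑(x : Z)) (cauchyBoundary Z))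
    (h₂ : 0 < ⨅ x : K₂, infDist (↑(x : Z)) (cauchyBoundary Z)) :
    ∃ S : Set ℝ, IsCompact S ∧ S ⊆ Set.Ioi 0 ∧
      ∀ (γ : Z ≃ Z) (lam : ℝ), 0 < lam →
        (∀ x y : Z, dist (γ x) (γ y) = lam * dist x y) →
        ((γ '' K₁) ∩ K₂).Nonempty → lam ∈ S := by
  have hcont : Continuous fun z : Z => infDist (z : Completion Z) (cauchyBoundary Z) :=
    (continuous_infDist_pt _).comp (Completion.continuous_coe Z)
  obtain ⟨a₁, b₁, ha₁, hb₁, hK₁⟩ := hK₁.exists_pos_forall_mem_Icc hcont.continuousOn h₁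
  obtain ⟨a₂, b₂, ha₂, -, hK₂⟩ := hK₂.exists_pos_forall_mem_Icc hcont.continuousOn h₂
  refine ⟨Set.Icc (a₂ / b₁) (b₂ / a₁), isCompact_Icc,
    fun _ hs => (div_pos ha₂ hb₁).trans_le hs.1, ?_⟩
  rintro γ lam hlam hγ ⟨_, ⟨x, hx, rfl⟩, hγx⟩
  have hscale := infDist_cauchyBoundary_apply_of_dist_eq_mul γ hlam hγ x
  obtain ⟨hlo₁, hhi₁⟩ := hK₁ x hx
  obtain ⟨hlo₂, hhi₂⟩ := hK₂ _ hγx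
  constructor
  · rw [div_le_iff₀ hb₁]
    calc a₂ ≤ _ := hlo₂
      _ = lam * _ := hscale
      _ ≤ lam * b₁ := by gcongr
  · rw [le_div_iff₀ ha₁]
    calc lam * a₁ ≤ lam * _ := by gcongr
      _ = _ := hscale.symm
      _ ≤ b₂ := hhi₂

/-- for compact `K₁, K₂ ⊆ Z` at positive distance from the nonempty Cauchy
boundary, the similarity ratios of all similarities `γ` of `Z` with `γ(K₁) ∩ K₂ ≠ ∅`
lie in a compact subset of `(0, ∞)`. -/
theorem stmt_1 {Z : Type*} [MetricSpace Z]
    (hB : (cauchyBoundary Z).Nonempty)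
    (K₁ K₂ : Set Z) (hK₁ : IsCompact K₁) (hK₂ : IsCompact K₂)
    (h₁ : 0 < ⨅ x : K₁, infDist (↑(x : Z)) (cauchyBoundary Z))
    (h₂ : 0 < ⨅ x : K₂, infDist (↑(x : Z)) (cauchyBoundary Z)) :
    ∃ S : Set ℝ, IsCompact S ∧ S ⊆ Set.Ioi 0 ∧
      ∀ (γ : Z ≃ Z) (lam : ℝ), 0 < lam →
        (∀ x y : Z, dist (γ x) (γ y) = lam * dist x y) →
        ((γ '' K₁) ∩ K₂).Nonempty → lam ∈ S :=
  stmt_1_general K₁ K₂ hK₁ hK₂ h₁ h₂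
end

section
/- Let G be a group acting by homeomorphisms on a topological space M and D ⊴ G a normal subgroup. If D acts properly discontinuously on M and G/D acts properly discontinuously on M/D, then G acts properly discontinuously on M: for every compact K ⊆ M, the set {g ∈ G : gK ∩ K ≠ ∅} is finite. -/
/-!
An element `g` moving `K` into itself is pinned down up to finitely many choices by its coset
`gD`, which moves the compact image of `K` in `M/D` into itself. Within a coset `g₀D`, writing
`g = g₀d`, the element `d` moves the compact set `K ∪ g₀⁻¹K` into itself, so `D` leaves only
finitely many choices there as well.
-/

open Set

section

variable {G M : Type*} [Group G] [TopologicalSpace M] [MulAction G M]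

lemma Subgroup.finite_setOf_smul_mem_inter_coset (D : Subgroup G)
    (hD : ∀ K : Set M, IsCompact K → {d : D | ∃ x ∈ K, (d : G) • x ∈ K}.Finite)
    {K : Set M} (hK : IsCompact K) (g₀ : G) (hg₀ : Continuous (fun x : M => g₀⁻¹ • x)) :
    ({g : G | ∃ x ∈ K, g • x ∈ K} ∩ QuotientGroup.mk ⁻¹' {(g₀ : G ⧸ D)}).Finite := by
  set K' := K ∪ (fun x : M => g₀⁻¹ • x) '' K
  refine ((hD K' (hK.union (hK.image hg₀))).image fun d : D => g₀ * d).subset ?_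
  rintro g ⟨⟨x, hx, hgx⟩, hg⟩
  have hd : g₀⁻¹ * g ∈ D := QuotientGroup.eq.mp (Eq.symm hg)
  refine ⟨⟨g₀⁻¹ * g, hd⟩, ⟨x, .inl hx, .inr ⟨g • x, hgx, ?_⟩⟩, mul_inv_cancel_left g₀ g⟩
  rw [mul_smul]

end

theorem stmt_4_general {G : Type*} [Group G] {M : Type*} [TopologicalSpace M] [MulAction G M]
    (hcont : ∀ g : G, Continuous (fun x : M => g • x))
    (D : Subgroup G)
    (hD : ∀ K : Set M, IsCompact K → {d : D | ∃ x ∈ K, (d : G) • x ∈ K}.Finite)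
    (hGD : ∀ L : Set (Quotient (MulAction.orbitRel D M)), IsCompact L →
      {c : G ⧸ D | ∃ g : G, (g : G ⧸ D) = c ∧ ∃ x : M,
        Quotient.mk (MulAction.orbitRel D M) x ∈ L ∧
        Quotient.mk (MulAction.orbitRel D M) (g • x) ∈ L}.Finite) :
    ∀ K : Set M, IsCompact K → {g : G | ∃ x ∈ K, g • x ∈ K}.Finite := by
  intro K hK
  have hcosets := hGD _ (hK.image continuous_quotient_mk')
  refine Finite.of_finite_fibers (QuotientGroup.mk : G → G ⧸ D) (hcosets.subset ?_) ?_
  · rintro _ ⟨g, ⟨x, hx, hgx⟩, rfl⟩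
    exact ⟨g, rfl, x, mem_image_of_mem _ hx, mem_image_of_mem _ hgx⟩
  · rintro _ ⟨g₀, -, rfl⟩
    exact D.finite_setOf_smul_mem_inter_coset hD hK g₀ (hcont g₀⁻¹)

/-- if `G` acts by homeomorphisms on `M`, `D ⊴ G` acts properly
discontinuously on `M`, and `G/D` acts properly discontinuously on `M/D` (with the
quotient topology, via `(gD)·(Dx) = D(gx)`), then `G` acts properly discontinuously
on `M`. -/
theorem stmt_4 {G : Type*} [Group G] {M : Type*} [TopologicalSpace M] [MulAction G M]
    (hcont : ∀ g : G, Continuous (fun x : M => g • x))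
    (D : Subgroup G) [D.Normal]
    (hD : ∀ K : Set M, IsCompact K → {d : D | ∃ x ∈ K, (d : G) • x ∈ K}.Finite)
    (hGD : ∀ L : Set (Quotient (MulAction.orbitRel D M)), IsCompact L →
      {c : G ⧸ D | ∃ g : G, (g : G ⧸ D) = c ∧ ∃ x : M,
        Quotient.mk (MulAction.orbitRel D M) x ∈ L ∧
        Quotient.mk (MulAction.orbitRel D M) (g • x) ∈ L}.Finite) :
    ∀ K : Set M, IsCompact K → {g : G | ∃ x ∈ K, g • x ∈ K}.Finite :=
  stmt_4_general hcont D hD hGD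
end

section
/- Let α = 2cos(2π/7) and σ(α) = 2cos(4π/7). Then the multiplicative subgroup of ℝ₊* generated by |α| and |σ(α)| has rank 2; equivalently, there are no integers (a,b) ≠ (0,0) with |α|^a = |σ(α)|^b. -/
/-!
`α = 2cos(2π/7)`, `β = α² - 2 = 2cos(4π/7)` and `γ = β² - 2 = 2cos(6π/7)` are the roots of the
irreducible cubic `X³ + X² - 2X - 1`, so the map `t ↦ t² - 2` on its roots is induced by field
embeddings of `ℚ(α)` into `ℝ`. Squared, a relation `|α|^a = |β|^b` is polynomial in `α`, hence
transports to `|β|^a = |γ|^b` and `|γ|^a = |α|^b`. With `x, y, z` the logarithms of `|α|, |β|, |γ|`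
this gives `a x = b y`, `a y = b z`, `a z = b x`, whence `(a³ - b³) x = 0`. Since `|α| > 1` this
forces `a = b`, and then `a (x - y) = 0` with `x > 0 > y` forces `a = 0`.
-/

open Real Polynomial IntermediateField

theorem IsConjRoot.zpow_aeval_eq_zpow_aeval {K L : Type*} [Field K] [Field L] [Algebra K L]
    {x y : L} (hx : IsIntegral K x) (hxy : IsConjRoot K x y) {p q : K[X]} {m n : ℤ}
    (h : aeval x p ^ m = aeval x q ^ n) : aeval y p ^ m = aeval y q ^ n := by
  have hy : y ∈ (minpoly K x).aroots L :=
    mem_aroots.mpr ⟨minpoly.ne_zero hx, hxy.aeval_eq_zero⟩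
  set φ := (algHomAdjoinIntegralEquiv K hx).symm ⟨y, hy⟩
  have hφ : φ (AdjoinSimple.gen K x) = y := algHomAdjoinIntegralEquiv_symm_apply_gen K hx _
  have hgen : aeval (AdjoinSimple.gen K x) p ^ m = aeval (AdjoinSimple.gen K x) q ^ n := by
    apply (algebraMap K⟮x⟯ L).injective
    simpa only [map_zpow₀, ← aeval_algebraMap_apply, AdjoinSimple.algebraMap_gen] using h
  simpa only [map_zpow₀, ← aeval_algHom_apply, hφ] using congrArg φ hgen

theorem eq_zero_of_mul_eq_mul_cyclic {K : Type*} [Field K] [LinearOrder K] [IsStrictOrderedRing K]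
    {a b x y z : K} (hxy : a * x = b * y) (hyz : a * y = b * z) (hzx : a * z = b * x)
    (hx : x ≠ 0) (hne : x ≠ y) : a = 0 ∧ b = 0 := by
  have hcube : (a ^ 3 - b ^ 3) * x = 0 := by
    linear_combination a ^ 2 * hxy + a * b * hyz + b ^ 2 * hzx
  have hab : a = b := (Odd.pow_inj (n := 3) (by decide)).mp
    (sub_eq_zero.mp ((mul_eq_zero.mp hcube).resolve_right hx))
  subst hab
  have ha : a * (x - y) = 0 := by linear_combination hxy
  have := (mul_eq_zero.mp ha).resolve_right (sub_ne_zero.mpr hne)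
  exact ⟨this, this⟩

noncomputable def heptagonCubic : ℚ[X] := X ^ 3 + X ^ 2 - C 2 * X - 1

namespace heptagonCubic

theorem aeval_eq {L : Type*} [CommRing L] [Algebra ℚ L] (t : L) :
    aeval t heptagonCubic = t ^ 3 + t ^ 2 - 2 * t - 1 := by
  simp [heptagonCubic, map_ofNat]

theorem natDegree_eq : heptagonCubic.natDegree = 3 := by
  unfold heptagonCubic; compute_degree!

theorem monic : heptagonCubic.Monic := by
  unfold heptagonCubic; monicity!

theorem roots_eq_zero : heptagonCubic.roots = 0 := by
  refine Multiset.eq_zero_of_forall_notMem fun r hr => ?_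
  have hr : r ^ 3 + r ^ 2 - 2 * r - 1 = 0 := by
    rw [← aeval_eq, coe_aeval_eq_eval]
    exact isRoot_of_mem_roots hr
  have hrZ : aeval r (X ^ 3 + X ^ 2 - 2 * X - 1 : ℤ[X]) = 0 := by
    simpa [map_ofNat] using hr
  obtain ⟨k, rfl⟩ := isInteger_of_is_root_of_monic (by monicity!) hrZ
  have hk : k * (k ^ 2 + k - 2) = 1 := by
    have : (k : ℚ) * (k ^ 2 + k - 2) = 1 := by
      simp only [algebraMap_int_eq, eq_intCast] at hr; linear_combination hr
    exact_mod_cast this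
  rcases Int.eq_one_or_neg_one_of_mul_eq_one hk with rfl | rfl <;> norm_num at hk

theorem irreducible : Irreducible heptagonCubic :=
  (irreducible_iff_roots_eq_zero_of_degree_le_three (by rw [natDegree_eq]; norm_num)
    (by rw [natDegree_eq])).mpr roots_eq_zero

theorem minpoly_eq {L : Type*} [Field L] [CharZero L] {t : L}
    (ht : t ^ 3 + t ^ 2 - 2 * t - 1 = 0) : minpoly ℚ t = heptagonCubic :=
  (minpoly.eq_of_irreducible_of_monic irreducible ((aeval_eq t).trans ht) monic).symm

theorem sq_sub_two_root {R : Type*} [CommRing R] {t : R} (ht : t ^ 3 + t ^ 2 - 2 * t - 1 = 0) :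
    (t ^ 2 - 2) ^ 3 + (t ^ 2 - 2) ^ 2 - 2 * (t ^ 2 - 2) - 1 = 0 := by
  linear_combination (t ^ 3 - t ^ 2 - 2 * t + 1) * ht

theorem sq_zpow_eq_of_root {L : Type*} [Field L] [CharZero L] {t s u : L}
    (ht : t ^ 3 + t ^ 2 - 2 * t - 1 = 0) (hs : s = t ^ 2 - 2) (hu : u = s ^ 2 - 2) {a b : ℤ}
    (h : (t ^ 2) ^ a = (s ^ 2) ^ b) : (s ^ 2) ^ a = (u ^ 2) ^ b := by
  have hconj : IsConjRoot ℚ t s := by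
    rw [isConjRoot_def, minpoly_eq ht, minpoly_eq (hs ▸ sq_sub_two_root ht)]
  have hint : IsIntegral ℚ t := ⟨heptagonCubic, monic, (aeval_eq t).trans ht⟩
  subst hs hu
  have := hconj.zpow_aeval_eq_zpow_aeval hint (p := X ^ 2) (q := (X ^ 2 - C 2) ^ 2)
    (by simpa [map_ofNat] using h)
  simpa [map_ofNat] using this

end heptagonCubic

theorem Real.mul_log_eq_mul_log_of_sq_zpow_eq {u v : ℝ} {a b : ℤ} (h : (u ^ 2) ^ a = (v ^ 2) ^ b) :
    a * log u = b * log v := by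
  have := congrArg log h
  rw [log_zpow, log_zpow, log_pow, log_pow] at this
  push_cast at this
  linarith

theorem two_cos_two_mul (θ : ℝ) : 2 * cos (2 * θ) = (2 * cos θ) ^ 2 - 2 := by
  rw [cos_two_mul]; ring

theorem two_cos_four_pi_div_seven_eq :
    2 * cos (4 * π / 7) = (2 * cos (2 * π / 7)) ^ 2 - 2 := by
  rw [← two_cos_two_mul]; ring_nf

theorem two_cos_six_pi_div_seven_eq :
    2 * cos (6 * π / 7) = (2 * cos (4 * π / 7)) ^ 2 - 2 := by
  rw [← two_cos_two_mul, show 2 * (4 * π / 7) = 2 * π - 6 * π / 7 by ring, cos_two_pi_sub]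

theorem two_cos_two_pi_div_seven_eq :
    2 * cos (2 * π / 7) = (2 * cos (6 * π / 7)) ^ 2 - 2 := by
  rw [← two_cos_two_mul, show 2 * (6 * π / 7) = 2 * π - 2 * π / 7 by ring, cos_two_pi_sub]

theorem two_cos_two_pi_div_seven_cubic :
    (2 * cos (2 * π / 7)) ^ 3 + (2 * cos (2 * π / 7)) ^ 2 - 2 * (2 * cos (2 * π / 7)) - 1 = 0 := by
  have hθ : cos (2 * π / 7) < 1 := by
    simpa using cos_lt_cos_of_nonneg_of_le_pi le_rfl (by linarith [pi_pos]) (by positivity)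
  set θ := 2 * π / 7
  -- `4θ = 2π - 3θ`; the factor `cos θ - 1` below accounts for the solution `θ = 0`
  have h : cos (2 * (2 * θ)) = cos (3 * θ) := by
    rw [show 2 * (2 * θ) = 2 * π - 3 * θ by ring, cos_two_pi_sub]
  rw [cos_two_mul, cos_two_mul, cos_three_mul] at h
  have hfac : (cos θ - 1) * ((2 * cos θ) ^ 3 + (2 * cos θ) ^ 2 - 2 * (2 * cos θ) - 1) = 0 := by
    linear_combination h
  exact (mul_eq_zero.mp hfac).resolve_left (sub_ne_zero.mpr hθ.ne)

theorem one_lt_two_cos_two_pi_div_seven : 1 < 2 * cos (2 * π / 7) := by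
  have := cos_lt_cos_of_nonneg_of_le_pi (x := 2 * π / 7) (y := π / 3) (by positivity)
    (by linarith [pi_pos]) (by linarith [pi_pos])
  rw [cos_pi_div_three] at this
  linarith

theorem two_cos_four_pi_div_seven_mem_Ioo : 2 * cos (4 * π / 7) ∈ Set.Ioo (-1) 0 := by
  have hneg : cos (4 * π / 7) < 0 :=
    cos_neg_of_pi_div_two_lt_of_lt (by linarith [pi_pos]) (by linarith [pi_pos])
  have := cos_lt_cos_of_nonneg_of_le_pi (x := 4 * π / 7) (y := π - π / 3) (by positivity)
    (by linarith [pi_pos]) (by linarith [pi_pos])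
  rw [cos_pi_sub, cos_pi_div_three] at this
  constructor <;> linarith

/-- the multiplicative subgroup of `ℝ₊*` generated by `|2cos(2π/7)|` and
`|2cos(4π/7)|` has rank 2: there are no integers `(a,b) ≠ (0,0)` with
`|2cos(2π/7)|^a = |2cos(4π/7)|^b`. -/
theorem stmt_11 :
    ∀ a b : ℤ,
      |2 * Real.cos (2 * π / 7)| ^ a = |2 * Real.cos (4 * π / 7)| ^ b →
      a = 0 ∧ b = 0 := by
  intro a b h
  have hα := two_cos_two_pi_div_seven_cubic
  have hβ := two_cos_four_pi_div_seven_eq ▸ heptagonCubic.sq_sub_two_root hα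
  have h₁ : ((2 * cos (2 * π / 7)) ^ 2) ^ a = ((2 * cos (4 * π / 7)) ^ 2) ^ b := by
    simp only [← sq_abs (2 * cos _), ← zpow_natCast _ 2, ← zpow_mul, mul_comm _ a, mul_comm _ b]
    rw [zpow_mul, h, ← zpow_mul]
  have h₂ := heptagonCubic.sq_zpow_eq_of_root hα
    two_cos_four_pi_div_seven_eq two_cos_six_pi_div_seven_eq h₁
  have h₃ := heptagonCubic.sq_zpow_eq_of_root hβ
    two_cos_six_pi_div_seven_eq two_cos_two_pi_div_seven_eq h₂
  have hlogα : 0 < log (2 * cos (2 * π / 7)) := log_pos one_lt_two_cos_two_pi_div_seven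
  have hlogβ : log (2 * cos (4 * π / 7)) < 0 :=
    log_neg_of_lt_zero two_cos_four_pi_div_seven_mem_Ioo.2 two_cos_four_pi_div_seven_mem_Ioo.1
  have := eq_zero_of_mul_eq_mul_cyclic (mul_log_eq_mul_log_of_sq_zpow_eq h₁)
    (mul_log_eq_mul_log_of_sq_zpow_eq h₂) (mul_log_eq_mul_log_of_sq_zpow_eq h₃) hlogα.ne'
    (by linarith)
  exact_mod_cast this
end
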